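/- arXiv:1305.1639 — 3 statements merged into one kernel-verified Lean document; each statement's English description precedes it below -/
import Mathlib

section
/- For every positive integer n, τ₂(n)² = Σ_{d² ∣ n} μ(d) · τ₄(n/d²), where τ₄ is the 4-dimensional divisor function (number of ordered quadruples (a,b,c,e) with abce = n). -/
/-!
Both sides are multiplicative in `n`: the right side is the Dirichlet convolution of `τ₄` with
`n ↦ μ(√n)` (supported on squares, Dirichlet series `1/ζ(2s)`), matching
`∑ τ(n)² n⁻ˢ = ζ(s)⁴/ζ(2s)`. At a prime power `τ₄(pᵏ) = C(k+3, 3)`, and the identity becomes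
`(k+1)² = C(k+3, 3) - C(k+1, 3)`.
-/

open Finset
open scoped ArithmeticFunction.zeta ArithmeticFunction.sigma ArithmeticFunction.Moebius

theorem Nat.Coprime.isSquare_mul_iff {m n : ℕ} (h : m.Coprime n) :
    IsSquare (m * n) ↔ IsSquare m ∧ IsSquare n := by
  refine ⟨fun ⟨c, hc⟩ => ?_, fun ⟨hm, hn⟩ => hm.mul hn⟩
  rw [← sq] at hc
  obtain ⟨a, rfl⟩ := exists_eq_pow_of_mul_eq_pow (Nat.isUnit_iff.mpr h) hc
  obtain ⟨b, rfl⟩ :=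
    exists_eq_pow_of_mul_eq_pow (Nat.isUnit_iff.mpr h.symm) ((mul_comm _ _).trans hc)
  exact ⟨⟨a, sq a⟩, ⟨b, sq b⟩⟩

theorem Nat.Prime.even_of_isSquare_pow {p k : ℕ} (hp : p.Prime) (h : IsSquare (p ^ k)) :
    Even k := by
  obtain ⟨c, hc⟩ := h
  obtain ⟨j, -, rfl⟩ := (Nat.dvd_prime_pow hp).1 (Dvd.intro c hc.symm)
  rw [← pow_add] at hc
  exact ⟨j, Nat.pow_right_injective hp.two_le hc⟩

theorem Nat.add_three_choose_three (k : ℕ) :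
    (k + 3).choose 3 = (k + 1).choose 3 + (k + 1) ^ 2 := by
  have h := Nat.add_one_mul_choose_eq k 1
  rw [Nat.choose_one_right] at h
  rw [Nat.choose_succ_succ' (k + 2), Nat.choose_succ_succ' (k + 1) 2,
    Nat.choose_succ_succ' (k + 1) 1, Nat.choose_one_right]
  linarith

namespace ArithmeticFunction

variable {R : Type*}

/-- The arithmetic function whose Dirichlet series is `F(2s)`, where `F(s)` is that of `f`. -/
def sqDilate [Zero R] (f : ArithmeticFunction R) : ArithmeticFunction R :=
  ⟨fun n => if IsSquare n then f n.sqrt else 0, by simp⟩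

section Zero

variable [Zero R] (f : ArithmeticFunction R)

@[simp]
theorem sqDilate_apply_sq (d : ℕ) : f.sqDilate (d ^ 2) = f d := by
  simp [sqDilate, Nat.sqrt_eq', IsSquare.sq]

theorem sqDilate_apply_mul_self (d : ℕ) : f.sqDilate (d * d) = f d := by
  rw [← sq, sqDilate_apply_sq]

theorem sqDilate_apply_of_not_isSquare {n : ℕ} (h : ¬IsSquare n) : f.sqDilate n = 0 := by
  simp [sqDilate, h]

theorem sqDilate_apply_prime_pow {p : ℕ} (hp : p.Prime) (k : ℕ) :
    f.sqDilate (p ^ k) = if Even k then f (p ^ (k / 2)) else 0 := by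
  split_ifs with hk
  · obtain ⟨j, rfl⟩ := hk
    rw [← two_mul, Nat.mul_div_cancel_left j two_pos, pow_mul', sqDilate_apply_sq]
  · exact sqDilate_apply_of_not_isSquare f (mt hp.even_of_isSquare_pow hk)

end Zero

theorem IsMultiplicative.sqDilate [MonoidWithZero R] {f : ArithmeticFunction R}
    (hf : f.IsMultiplicative) : f.sqDilate.IsMultiplicative := by
  refine ⟨by simpa using (f.sqDilate_apply_mul_self 1).trans hf.map_one, fun {m n} hmn => ?_⟩
  by_cases h : IsSquare m ∧ IsSquare n
  · obtain ⟨⟨a, rfl⟩, ⟨b, rfl⟩⟩ := h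
    have hab : a.Coprime b := by
      simpa using Nat.Coprime.coprime_mul_right (Nat.Coprime.coprime_mul_right_right hmn)
    rw [mul_mul_mul_comm, sqDilate_apply_mul_self, sqDilate_apply_mul_self,
      sqDilate_apply_mul_self, hf.map_mul_of_coprime hab]
  · rw [sqDilate_apply_of_not_isSquare _ (mt hmn.isSquare_mul_iff.1 h)]
    rcases not_and_or.1 h with h | h <;> simp [sqDilate_apply_of_not_isSquare _ h]

theorem sqDilate_mul_apply [Semiring R] (f g : ArithmeticFunction R) (n : ℕ) :
    (f.sqDilate * g) n = ∑ d ∈ n.divisors.filter (fun d => d ^ 2 ∣ n), f d * g (n / d ^ 2) := by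
  rw [mul_apply, Nat.sum_divisorsAntidiagonal (fun a b => f.sqDilate a * g b)]
  symm
  refine sum_bij_ne_zero (fun d _ _ => d ^ 2) (fun d hd _ => ?_) (fun d₁ _ _ d₂ _ _ h => ?_)
    (fun a ha hne => ?_) (fun d _ _ => by rw [sqDilate_apply_sq])
  · simp only [mem_filter, Nat.mem_divisors] at hd ⊢
    exact ⟨hd.2, hd.1.2⟩
  · exact Nat.pow_left_injective two_ne_zero h
  · obtain ⟨r, rfl⟩ : IsSquare a := by
      by_contra h
      exact hne (by rw [sqDilate_apply_of_not_isSquare _ h, zero_mul])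
    rw [← sq] at ha hne
    rw [sqDilate_apply_sq] at hne
    simp only [mem_filter, Nat.mem_divisors] at ha ⊢
    exact ⟨r, ⟨⟨(dvd_pow_self r two_ne_zero).trans ha.1, ha.2⟩, ha.1⟩, hne, sq r⟩

theorem mul_apply_prime_pow [Semiring R] (f g : ArithmeticFunction R) {p : ℕ} (hp : p.Prime)
    (k : ℕ) : (f * g) (p ^ k) = ∑ i ∈ range (k + 1), f (p ^ i) * g (p ^ (k - i)) := by
  rw [mul_apply, Nat.sum_divisorsAntidiagonal (fun a b => f a * g b),
    Nat.sum_divisors_prime_pow hp]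
  refine sum_congr rfl fun i hi => ?_
  rw [Nat.pow_div (Nat.lt_succ_iff.1 (mem_range.1 hi)) hp.pos]

theorem zeta_pow_apply_prime_pow {p : ℕ} (hp : p.Prime) (m k : ℕ) :
    ((ζ : ArithmeticFunction ℕ) ^ (m + 1)) (p ^ k) = (k + m).choose m := by
  induction m generalizing k with
  | zero => simp [hp.ne_zero]
  | succ m ih =>
    rw [pow_succ, mul_zeta_apply, Nat.sum_divisors_prime_pow hp]
    simp only [ih]
    exact Nat.sum_range_add_choose k m

theorem sqDilate_moebius_apply_prime_pow {p : ℕ} (hp : p.Prime) (k : ℕ) :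
    (μ : ArithmeticFunction ℤ).sqDilate (p ^ k) =
      if k = 0 then 1 else if k = 2 then -1 else 0 := by
  rw [sqDilate_apply_prime_pow _ hp]
  rcases Nat.even_or_odd' k with ⟨j, rfl | rfl⟩
  · rw [if_pos (even_two_mul j), Nat.mul_div_cancel_left j two_pos]
    rcases j with _ | _ | j
    · simp
    · simp [moebius_apply_prime hp]
    · rw [moebius_apply_prime_pow hp (by omega)]
      simp
  · rw [if_neg (Nat.not_even_two_mul_add_one j)]
    simp

theorem sigma_zero_pmul_self_eq_sqDilate_moebius_mul :
    (((σ 0).pmul (σ 0) : ArithmeticFunction ℕ) : ArithmeticFunction ℤ) =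
      (μ : ArithmeticFunction ℤ).sqDilate *
        ((ζ ^ 4 : ArithmeticFunction ℕ) : ArithmeticFunction ℤ) := by
  refine (IsMultiplicative.eq_iff_eq_on_prime_powers _
    (isMultiplicative_sigma.pmul isMultiplicative_sigma).natCast _
    (isMultiplicative_moebius.sqDilate.mul (isMultiplicative_zeta.pow).natCast)).2 fun p k hp => ?_
  rw [mul_apply_prime_pow _ _ hp]
  simp only [natCoe_apply, pmul_apply, sigma_zero_apply_prime_pow hp,
    zeta_pow_apply_prime_pow hp 3, sqDilate_moebius_apply_prime_pow hp]
  obtain hk | hk := lt_or_ge k 2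
  · interval_cases k <;> simp [sum_range_succ]
  · obtain ⟨k, rfl⟩ := Nat.exists_eq_add_of_le' hk
    rw [sum_eq_add 0 2 two_ne_zero.symm (fun i _ hi => by simp [hi.1, hi.2])
      (fun h => absurd (by simp) h) (fun h => absurd (by simp) h), if_pos rfl, if_neg two_ne_zero,
      if_pos rfl, Nat.sub_zero, Nat.add_sub_cancel, Nat.add_three_choose_three (k + 2)]
    push_cast
    ring

end ArithmeticFunction

open ArithmeticFunction in
theorem divisor_count_sq_eq_moebius_conv_tau4_general (n : ℕ) :
    ((n.divisors.card : ℤ)) ^ 2 =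
      ∑ d ∈ n.divisors.filter (fun d => d ^ 2 ∣ n),
        ArithmeticFunction.moebius d *
          (((ArithmeticFunction.zeta * ArithmeticFunction.zeta * ArithmeticFunction.zeta *
              ArithmeticFunction.zeta) (n / d ^ 2) : ℕ) : ℤ) := by
  have key := congrArg (· n) sigma_zero_pmul_self_eq_sqDilate_moebius_mul
  simp only [natCoe_apply, pmul_apply, sigma_zero_apply, sqDilate_mul_apply] at key
  rw [show (ζ * ζ * ζ * ζ : ArithmeticFunction ℕ) = ζ ^ 4 by ring, sq, ← Nat.cast_mul, key]

open ArithmeticFunction in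
/-- `τ₂(n)² = ∑_{d² ∣ n} μ(d) τ₄(n/d²)`, where `τ₄ = 1 ⋆ 1 ⋆ 1 ⋆ 1`. -/
theorem divisor_count_sq_eq_moebius_conv_tau4 (n : ℕ) (hn : 0 < n) :
    ((n.divisors.card : ℤ)) ^ 2 =
      ∑ d ∈ n.divisors.filter (fun d => d ^ 2 ∣ n),
        ArithmeticFunction.moebius d *
          (((ArithmeticFunction.zeta * ArithmeticFunction.zeta * ArithmeticFunction.zeta *
              ArithmeticFunction.zeta) (n / d ^ 2) : ℕ) : ℤ) :=
  divisor_count_sq_eq_moebius_conv_tau4_general n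
end

section
/- The function r(n)/4, where r(n) = #{(k,l) ∈ ℤ² : k² + l² = n}, is multiplicative, and equals the Dirichlet convolution of χ₄ and the constant function 1, i.e., r(n)/4 = Σ_{d ∣ n} χ₄(d), where χ₄ is the nonprincipal character modulo 4. -/
/-- `r(n) = #{(k,l) ∈ ℤ² : k² + l² = n}`, the number of representations of `n`
as an ordered sum of two squares (with signs). -/
noncomputable def sumTwoSquaresReps (n : ℕ) : ℕ :=
  ((Finset.Icc (-(n : ℤ)) (n : ℤ) ×ˢ Finset.Icc (-(n : ℤ)) (n : ℤ)).filter
    (fun p => p.1 ^ 2 + p.2 ^ 2 = (n : ℤ))).card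

/-!
`r(n)` counts the Gaussian integers of norm `n`. Since `ℤ[i]` has exactly four units, for `n ≠ 0`
this is four times the number of associate classes of norm `n`. Unique factorisation in `ℤ[i]`
makes that class count multiplicative: for coprime `m, n` a class of norm `mn` is uniquely the
product of a class of norm `m` and one of norm `n`. At a prime power `p ^ k` the classes are those
of `(1 + i) ^ k` if `p = 2`, of `π ^ i * π̄ ^ (k - i)` for `i ≤ k` if `p = π π̄` with `p ≡ 1 mod 4`,
and of `p ^ (k / 2)` (for even `k` only) if `p ≡ 3 mod 4`, since then `p` stays prime. These counts
`1`, `k + 1` and `[k even]` are `∑_{i ≤ k} χ₄(p) ^ i = ∑_{d ∣ p ^ k} χ₄(d)`.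
-/

open Finset

theorem Nat.Coprime.sum_divisors_mul_of_map_mul {R : Type*} [CommSemiring R] {f : ℕ → R}
    (hf : ∀ a b, a.Coprime b → f (a * b) = f a * f b) {m n : ℕ} (hmn : m.Coprime n) :
    ∑ d ∈ (m * n).divisors, f d = (∑ d ∈ m.divisors, f d) * ∑ d ∈ n.divisors, f d := by
  rw [hmn.divisors_mul, sum_map]
  refine (sum_attach (m.divisors ×ˢ n.divisors) (fun p => f (p.1 * p.2))).trans ?_
  rw [sum_mul_sum, sum_product]
  refine sum_congr rfl fun a ha => sum_congr rfl fun b hb => hf a b ?_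
  exact (hmn.coprime_dvd_left (Nat.dvd_of_mem_divisors ha)).coprime_dvd_right
    (Nat.dvd_of_mem_divisors hb)

theorem Nat.Coprime.eq_of_mul_eq_of_dvd_sq {m n x y : ℕ} (hmn : m.Coprime n) (hm : 0 < m)
    (hn : 0 < n) (hx : x ∣ m ^ 2) (hy : y ∣ n ^ 2) (h : x * y = m * n) : x = m ∧ y = n := by
  have hxm : x ∣ m := (Nat.Coprime.coprime_dvd_left hx (hmn.pow_left 2)).dvd_of_dvd_mul_right
    (h ▸ Dvd.intro y rfl)
  have hyn : y ∣ n := (Nat.Coprime.coprime_dvd_left hy (hmn.symm.pow_left 2)).dvd_of_dvd_mul_left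
    (h ▸ Dvd.intro_left x rfl)
  have := Nat.le_of_dvd hm hxm
  have := Nat.le_of_dvd hn hyn
  constructor <;> nlinarith

theorem Prime.eq_of_associated_pow_mul_pow {M : Type*} [CommMonoidWithZero M] [IsCancelMulZero M]
    {π ρ : M} (hπ : Prime π) (hπρ : ¬π ∣ ρ) {i j l m : ℕ}
    (h : Associated (π ^ i * ρ ^ l) (π ^ j * ρ ^ m)) : i = j := by
  have hle {a b c : ℕ} (h : π ^ a ∣ π ^ b * ρ ^ c) : a ≤ b :=
    (pow_dvd_pow_iff hπ.ne_zero hπ.not_isUnit).mp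
      (hπ.pow_dvd_of_dvd_mul_right _ (fun h' => hπρ (hπ.dvd_of_dvd_pow h')) h)
  exact le_antisymm (hle ((dvd_mul_right _ _).trans h.dvd))
    (hle ((dvd_mul_right _ _).trans h.symm.dvd))

namespace GaussianInt

theorem norm_eq_sq_add_sq (z : GaussianInt) : z.norm = z.re ^ 2 + z.im ^ 2 := by
  rw [Zsqrtd.norm_def]; ring

theorem norm_pow (z : GaussianInt) (k : ℕ) : (z ^ k).norm = z.norm ^ k :=
  map_pow Zsqrtd.normMonoidHom z k

theorem norm_eq_of_associated {a b : GaussianInt} (h : Associated a b) : a.norm = b.norm :=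
  Zsqrtd.norm_eq_of_associated (by norm_num) h

theorem dvd_natCast_of_norm_eq {z : GaussianInt} {n : ℕ} (h : z.norm = n) :
    z ∣ (n : GaussianInt) :=
  ⟨star z, by rw [← Zsqrtd.norm_eq_mul_conj, h, Int.cast_natCast]⟩

theorem prime_of_natAbs_norm_prime {π : GaussianInt} (h : π.norm.natAbs.Prime) : Prime π := by
  refine irreducible_iff_prime.mp ⟨fun hu => h.ne_one (Zsqrtd.norm_eq_one_iff.mpr hu),
    fun a b hab => ?_⟩
  rw [hab, Zsqrtd.norm_mul, Int.natAbs_mul, Nat.prime_mul_iff] at h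
  rcases h with ⟨-, h⟩ | ⟨-, h⟩
  · exact Or.inr (Zsqrtd.norm_eq_one_iff.mp h)
  · exact Or.inl (Zsqrtd.norm_eq_one_iff.mp h)

theorem isCoprime_of_norm_eq {a b : GaussianInt} {m n : ℕ} (hmn : m.Coprime n) (ha : a.norm = m)
    (hb : b.norm = n) : IsCoprime a b := by
  have hcast : IsCoprime (m : GaussianInt) (n : GaussianInt) := by
    simpa using (Nat.isCoprime_iff_coprime.mpr hmn).map (Int.castRingHom GaussianInt)
  exact (hcast.of_isCoprime_of_dvd_left (dvd_natCast_of_norm_eq ha)).of_isCoprime_of_dvd_right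
    (dvd_natCast_of_norm_eq hb)

def unitsFinset : Finset GaussianInt := {1, -1, ⟨0, 1⟩, ⟨0, -1⟩}

theorem isUnit_iff_mem_unitsFinset {u : GaussianInt} : IsUnit u ↔ u ∈ unitsFinset := by
  rw [← Zsqrtd.norm_eq_one_iff' (by norm_num), norm_eq_sq_add_sq]
  constructor
  · obtain ⟨a, b⟩ := u
    intro h
    obtain ⟨ha₁, ha₂⟩ : -1 ≤ a ∧ a ≤ 1 := ⟨by nlinarith, by nlinarith⟩
    obtain ⟨hb₁, hb₂⟩ : -1 ≤ b ∧ b ≤ 1 := ⟨by nlinarith, by nlinarith⟩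
    revert h
    interval_cases a <;> interval_cases b <;> decide
  · simp only [unitsFinset, mem_insert, mem_singleton]
    rintro (rfl | rfl | rfl | rfl) <;> rfl

theorem setOf_norm_eq_eq_image (n : ℕ) :
    {z : GaussianInt | z.norm = n} = (fun p : ℤ × ℤ => (⟨p.1, p.2⟩ : GaussianInt)) ''
      ↑((Icc (-(n : ℤ)) n ×ˢ Icc (-(n : ℤ)) n).filter (fun p => p.1 ^ 2 + p.2 ^ 2 = (n : ℤ))) := by
  ext ⟨a, b⟩
  simp only [Set.mem_ofPred_eq, norm_eq_sq_add_sq, coe_filter, mem_product, mem_Icc,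
    Set.mem_image, Prod.exists, Zsqrtd.mk.injEq]
  constructor
  · intro h
    exact ⟨a, b, ⟨⟨⟨by nlinarith, by nlinarith⟩, by nlinarith, by nlinarith⟩, h⟩, rfl, rfl⟩
  · rintro ⟨a, b, ⟨-, h⟩, rfl, rfl⟩
    exact h

theorem sumTwoSquaresReps_eq_ncard (n : ℕ) :
    sumTwoSquaresReps n = {z : GaussianInt | z.norm = n}.ncard := by
  rw [setOf_norm_eq_eq_image, Set.ncard_image_of_injective _ fun p q h =>
    Prod.ext (congrArg Zsqrtd.re h) (congrArg Zsqrtd.im h), Set.ncard_coe_finset]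
  rfl

theorem finite_setOf_norm_eq (n : ℕ) : {z : GaussianInt | z.norm = n}.Finite := by
  rw [setOf_norm_eq_eq_image]
  exact (finite_toSet _).image _

def normClasses (n : ℕ) : Set (Associates GaussianInt) :=
  Associates.mk '' {z | z.norm = n}

theorem card_filter_associated {s : Finset GaussianInt} {z : GaussianInt}
    [DecidablePred (Associated z)] (hz : z ≠ 0) (hs : ∀ x, Associated z x → x ∈ s) :
    #{x ∈ s | Associated z x} = 4 := by
  have : {x ∈ s | Associated z x} = unitsFinset.image (z * ·) := by
    ext x
    simp only [mem_filter, mem_image]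
    constructor
    · rintro ⟨-, u, rfl⟩
      exact ⟨u, isUnit_iff_mem_unitsFinset.mp u.isUnit, rfl⟩
    · rintro ⟨u, hu, rfl⟩
      have h := associated_mul_unit_right z u (isUnit_iff_mem_unitsFinset.mpr hu)
      exact ⟨hs _ h, h⟩
  rw [this, card_image_of_injective _ (mul_right_injective₀ hz)]
  rfl

theorem ncard_setOf_norm_eq {n : ℕ} (hn : n ≠ 0) :
    {z : GaussianInt | z.norm = n}.ncard = 4 * (normClasses n).ncard := by
  classical
  set s := (finite_setOf_norm_eq n).toFinset
  have hs : normClasses n = ↑(s.image Associates.mk) := by simp [normClasses, s]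
  rw [hs, Set.ncard_coe_finset, Set.ncard_eq_toFinset_card _ (finite_setOf_norm_eq n),
    card_eq_sum_card_image Associates.mk s, mul_comm, ← smul_eq_mul, ← sum_const]
  refine sum_congr rfl fun _ hb => ?_
  obtain ⟨z, hz, rfl⟩ := mem_image.mp hb
  rw [filter_congr fun x _ => Associates.mk_eq_mk_iff_associated.trans Associated.comm]
  refine card_filter_associated ?_ fun x hx => ?_
  · rintro rfl
    simp only [s, Set.Finite.mem_toFinset, Set.mem_ofPred_eq, Zsqrtd.norm_zero] at hz
    omega
  · simpa [s, ← norm_eq_of_associated hx] using hz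

theorem exists_mul_eq_of_norm_eq_mul {z : GaussianInt} {m n : ℕ} (hmn : m.Coprime n)
    (hm : 0 < m) (hn : 0 < n) (hz : z.norm = (m * n : ℕ)) :
    ∃ a b, z = a * b ∧ a.norm = m ∧ b.norm = n := by
  obtain ⟨a, b, ha, hb, rfl⟩ := exists_dvd_and_dvd_of_dvd_mul
    (by simpa using dvd_natCast_of_norm_eq hz : z ∣ (m : GaussianInt) * n)
  have hnorm : a.norm.natAbs * b.norm.natAbs = m * n := by
    rw [← Int.natAbs_mul, ← Zsqrtd.norm_mul, hz, Int.natAbs_natCast]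
  have hdvd (c : GaussianInt) (k : ℕ) (h : c ∣ (k : GaussianInt)) : c.norm.natAbs ∣ k ^ 2 := by
    have : c.norm ∣ (k : GaussianInt).norm := map_dvd Zsqrtd.normMonoidHom h
    rwa [← Int.natAbs_dvd_natAbs, Zsqrtd.norm_natCast, Int.natAbs_mul, Int.natAbs_natCast, ← sq] at this
  obtain ⟨h₁, h₂⟩ := hmn.eq_of_mul_eq_of_dvd_sq hm hn (hdvd a m ha) (hdvd b n hb) hnorm
  exact ⟨a, b, rfl, by rw [← abs_natCast_norm, h₁], by rw [← abs_natCast_norm, h₂]⟩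

theorem associated_and_associated_of_mul {a b c d : GaussianInt} {m n : ℕ} (hmn : m.Coprime n)
    (hm : 0 < m) (ha : a.norm = m) (hb : b.norm = n) (hc : c.norm = m) (hd : d.norm = n)
    (h : Associated (a * b) (c * d)) : Associated a c ∧ Associated b d := by
  have ha₀ : a ≠ 0 := by
    rintro rfl
    rw [Zsqrtd.norm_zero] at ha
    omega
  have hac : Associated a c := associated_of_dvd_dvd
    ((isCoprime_of_norm_eq hmn ha hd).dvd_of_dvd_mul_right ((dvd_mul_right a b).trans h.dvd))
    ((isCoprime_of_norm_eq hmn hc hb).dvd_of_dvd_mul_right ((dvd_mul_right c d).trans h.symm.dvd))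
  exact ⟨hac, h.of_mul_left hac ha₀⟩

theorem normClasses_mul {m n : ℕ} (hmn : m.Coprime n) (hm : 0 < m) (hn : 0 < n) :
    normClasses (m * n) = (fun p => p.1 * p.2) '' (normClasses m ×ˢ normClasses n) := by
  ext x
  constructor
  · rintro ⟨z, hz, rfl⟩
    obtain ⟨a, b, rfl, ha, hb⟩ := exists_mul_eq_of_norm_eq_mul hmn hm hn hz
    exact ⟨(Associates.mk a, Associates.mk b), ⟨⟨a, ha, rfl⟩, b, hb, rfl⟩, Associates.mk_mul_mk⟩
  · rintro ⟨⟨_, _⟩, ⟨⟨a, ha, rfl⟩, b, hb, rfl⟩, rfl⟩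
    refine ⟨a * b, ?_, Associates.mk_mul_mk.symm⟩
    simp_all [Zsqrtd.norm_mul]

theorem ncard_normClasses_mul {m n : ℕ} (hmn : m.Coprime n) (hm : 0 < m) (hn : 0 < n) :
    (normClasses (m * n)).ncard = (normClasses m).ncard * (normClasses n).ncard := by
  rw [normClasses_mul hmn hm hn, Set.InjOn.ncard_image, Set.ncard_prod]
  rintro ⟨_, _⟩ ⟨⟨a, ha, rfl⟩, b, hb, rfl⟩ ⟨_, _⟩ ⟨⟨c, hc, rfl⟩, d, hd, rfl⟩ h
  simp only [Associates.mk_mul_mk, Associates.mk_eq_mk_iff_associated] at h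
  obtain ⟨hac, hbd⟩ := associated_and_associated_of_mul hmn hm ha hb hc hd h
  exact Prod.ext (Associates.mk_eq_mk_iff_associated.mpr hac)
    (Associates.mk_eq_mk_iff_associated.mpr hbd)

theorem one_lt_natAbs_norm {π : GaussianInt} (hπ : Prime π) : 1 < π.norm.natAbs := by
  have h₀ : π.norm.natAbs ≠ 0 := by simpa using hπ.ne_zero
  have h₁ : π.norm.natAbs ≠ 1 := fun h => hπ.not_isUnit (Zsqrtd.norm_eq_one_iff.mp h)
  omega

theorem prime_star {π : GaussianInt} (hπ : Prime π) : Prime (star π) :=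
  (MulEquiv.prime_iff (starRingAut : RingAut GaussianInt)).mpr hπ

theorem exists_associated_pow_mul_star_pow {π z : GaussianInt} (hπ : Prime π) {k : ℕ}
    (hz : z.norm = π.norm ^ k) : ∃ i ≤ k, Associated z (π ^ i * star π ^ (k - i)) := by
  have hdvd : z ∣ π ^ k * star π ^ k :=
    ⟨star z, by rw [← mul_pow, ← Zsqrtd.norm_eq_mul_conj, ← Zsqrtd.norm_eq_mul_conj, hz,
      Int.cast_pow]⟩
  obtain ⟨a, b, ha, hb, rfl⟩ := exists_dvd_and_dvd_of_dvd_mul hdvd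
  obtain ⟨i, -, hai⟩ := (dvd_prime_pow hπ k).mp ha
  obtain ⟨j, -, hbj⟩ := (dvd_prime_pow (prime_star hπ) k).mp hb
  have hij : i + j = k := by
    apply Int.pow_right_injective (one_lt_natAbs_norm hπ)
    simp only
    rw [pow_add, ← hz, Zsqrtd.norm_mul, norm_eq_of_associated hai, norm_eq_of_associated hbj,
      norm_pow, norm_pow, Zsqrtd.norm_conj]
  refine ⟨i, by omega, ?_⟩
  rw [← hij, Nat.add_sub_cancel_left]
  exact hai.mul_mul hbj

theorem exists_associated_natCast_pow {p : ℕ} (hp : p.Prime) (hp3 : p % 4 = 3)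
    {z : GaussianInt} {k : ℕ} (hz : z.norm = (p ^ k : ℕ)) :
    ∃ i, k = 2 * i ∧ Associated z ((p : GaussianInt) ^ i) := by
  have := Fact.mk hp
  obtain ⟨i, -, hi⟩ := (dvd_prime_pow (prime_of_nat_prime_of_mod_four_eq_three p hp3) k).mp
    (by simpa using dvd_natCast_of_norm_eq hz)
  refine ⟨i, Nat.pow_right_injective hp.two_le ?_, hi⟩
  have := norm_eq_of_associated hi
  rw [hz, norm_pow, Zsqrtd.norm_natCast] at this
  simp only
  rw [pow_mul, sq]
  exact_mod_cast this

theorem not_dvd_star {π : GaussianInt} {p : ℕ} (hp : p.Prime) (hp2 : p ≠ 2) (hπ : π.norm = p) :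
    ¬π ∣ star π := by
  rintro ⟨c, hc⟩
  have hc₁ : IsUnit c := by
    rw [← Zsqrtd.norm_eq_one_iff' (by norm_num)]
    have h := congrArg Zsqrtd.norm hc
    rw [Zsqrtd.norm_conj, Zsqrtd.norm_mul, hπ] at h
    exact (mul_eq_left₀ (by exact_mod_cast hp.ne_zero)).mp h.symm
  have hnot_sq (t : ℤ) : (p : ℤ) ≠ t ^ 2 := fun h => by
    have h' : p = t.natAbs ^ 2 := by simpa [Int.natAbs_pow] using congrArg Int.natAbs h
    exact Nat.Prime.not_prime_pow' (by norm_num) (h' ▸ hp)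
  have hnot_two_sq (t : ℤ) : (p : ℤ) ≠ 2 * t ^ 2 := fun h => by
    have h' : p = 2 * t.natAbs ^ 2 := by
      simpa [Int.natAbs_pow, Int.natAbs_mul] using congrArg Int.natAbs h
    have := hp.eq_one_or_self_of_dvd 2 ⟨_, h'⟩
    omega
  -- Each of the four units forces `π` onto an axis or a diagonal.
  obtain ⟨a, b⟩ := π
  rw [norm_eq_sq_add_sq] at hπ
  dsimp only at hπ
  simp only [isUnit_iff_mem_unitsFinset, unitsFinset, mem_insert, mem_singleton] at hc₁
  rcases hc₁ with rfl | rfl | rfl | rfl <;>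
    simp only [Zsqrtd.star_mk, Zsqrtd.ext_iff, Zsqrtd.re_mul, Zsqrtd.im_mul, Zsqrtd.re_neg,
      Zsqrtd.im_neg, Zsqrtd.re_one, Zsqrtd.im_one] at hc
  · exact hnot_sq a (by rw [← hπ, show b = 0 by omega]; ring)
  · exact hnot_sq b (by rw [← hπ, show a = 0 by omega]; ring)
  · exact hnot_two_sq b (by rw [← hπ, show a = -b by omega]; ring)
  · exact hnot_two_sq b (by rw [← hπ, show a = b by omega]; ring)

theorem ncard_normClasses_two_pow (k : ℕ) : (normClasses (2 ^ k)).ncard = 1 := by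
  set π : GaussianInt := ⟨1, 1⟩
  have hπ : π.norm = 2 := rfl
  have hπp : Prime π := prime_of_natAbs_norm_prime (by rw [hπ]; norm_num)
  have hstar : Associated (star π) π :=
    associated_mul_unit_right (star π) ⟨0, 1⟩ (isUnit_iff_mem_unitsFinset.mpr (by decide))
  rw [Set.ncard_eq_one]
  refine ⟨Associates.mk (π ^ k), Set.eq_singleton_iff_unique_mem.mpr
    ⟨⟨π ^ k, by simp [norm_pow, hπ], rfl⟩, ?_⟩⟩
  rintro _ ⟨z, hz, rfl⟩
  obtain ⟨i, hi, hz⟩ := exists_associated_pow_mul_star_pow hπp (by rw [hz, hπ]; push_cast; rfl)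
  have h := (hstar.pow_pow (n := k - i)).mul_left (π ^ i)
  rw [← pow_add, Nat.add_sub_cancel' hi] at h
  exact Associates.mk_eq_mk_iff_associated.mpr (hz.trans h)

theorem ncard_normClasses_pow_of_mod_four_eq_three {p : ℕ} (hp : p.Prime) (hp3 : p % 4 = 3)
    (k : ℕ) : (normClasses (p ^ k)).ncard = if Even k then 1 else 0 := by
  split_ifs with hk
  · obtain ⟨i, rfl⟩ := hk
    rw [Set.ncard_eq_one]
    refine ⟨Associates.mk ((p : GaussianInt) ^ i), Set.eq_singleton_iff_unique_mem.mpr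
      ⟨⟨_, by simp [norm_pow, Zsqrtd.norm_natCast, pow_add, mul_pow], rfl⟩, ?_⟩⟩
    rintro _ ⟨z, hz, rfl⟩
    obtain ⟨j, hj, hzj⟩ := exists_associated_natCast_pow hp hp3 hz
    obtain rfl : j = i := by omega
    exact Associates.mk_eq_mk_iff_associated.mpr hzj
  · convert Set.ncard_empty (Associates GaussianInt)
    refine Set.eq_empty_iff_forall_notMem.mpr ?_
    rintro _ ⟨z, hz, rfl⟩
    obtain ⟨j, rfl, -⟩ := exists_associated_natCast_pow hp hp3 hz
    exact hk ⟨j, two_mul j⟩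

theorem ncard_normClasses_pow_of_mod_four_eq_one {p : ℕ} (hp : p.Prime) (hp1 : p % 4 = 1)
    (k : ℕ) : (normClasses (p ^ k)).ncard = k + 1 := by
  have := Fact.mk hp
  obtain ⟨a, b, hab⟩ := Nat.Prime.sq_add_sq (p := p) (by omega)
  obtain ⟨π, hπ⟩ : ∃ π : GaussianInt, π.norm = p :=
    ⟨⟨a, b⟩, by simp only [norm_eq_sq_add_sq]; exact_mod_cast hab⟩
  have hπp : Prime π := prime_of_natAbs_norm_prime (by rw [hπ, Int.natAbs_natCast]; exact hp)
  have hclasses : normClasses (p ^ k) =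
      (fun i => Associates.mk (π ^ i * star π ^ (k - i))) '' Set.Iic k := by
    ext x
    constructor
    · rintro ⟨z, hz, rfl⟩
      obtain ⟨i, hi, hz⟩ :=
        exists_associated_pow_mul_star_pow hπp (by rw [hz, hπ]; push_cast; rfl)
      exact ⟨i, hi, Associates.mk_eq_mk_iff_associated.mpr hz.symm⟩
    · rintro ⟨i, hi, rfl⟩
      refine ⟨_, ?_, rfl⟩
      rw [Set.mem_ofPred_eq, Zsqrtd.norm_mul, norm_pow, norm_pow, Zsqrtd.norm_conj, hπ,
        ← pow_add, Nat.add_sub_cancel' hi]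
      push_cast; rfl
  rw [hclasses, Set.InjOn.ncard_image, Set.ncard_Iic_nat]
  intro i _ j _ h
  exact hπp.eq_of_associated_pow_mul_pow (not_dvd_star hp (by omega) hπ)
    (Associates.mk_eq_mk_iff_associated.mp h)

theorem ncard_normClasses_prime_pow {p : ℕ} (hp : p.Prime) (k : ℕ) :
    ((normClasses (p ^ k)).ncard : ℤ) = ∑ i ∈ range (k + 1), ZMod.χ₄ p ^ i := by
  rcases hp.eq_two_or_odd with rfl | hodd
  · rw [ncard_normClasses_two_pow, sum_range_succ']
    simp
  rcases Nat.odd_mod_four_iff.mp hodd with hp1 | hp3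
  · simp [ncard_normClasses_pow_of_mod_four_eq_one hp hp1, ZMod.χ₄_nat_one_mod_four hp1]
  · rw [ncard_normClasses_pow_of_mod_four_eq_three hp hp3, ZMod.χ₄_nat_three_mod_four hp3,
      neg_one_geom_sum]
    by_cases hk : Even k <;> simp [hk, Nat.even_add_one]

theorem ncard_normClasses_eq_sum_divisors {n : ℕ} (hn : 0 < n) :
    ((normClasses n).ncard : ℤ) = ∑ d ∈ n.divisors, ZMod.χ₄ d := by
  induction n using Nat.recOnPosPrimePosCoprime with
  | prime_pow p k hp _ =>
    rw [ncard_normClasses_prime_pow hp, Nat.sum_divisors_prime_pow hp]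
    simp only [Nat.cast_pow, map_pow]
  | zero => omega
  | one => simpa using ncard_normClasses_prime_pow Nat.prime_two 0
  | coprime a b ha hb hab iha ihb =>
    rw [ncard_normClasses_mul hab (by omega) (by omega), Nat.cast_mul, iha (by omega),
      ihb (by omega)]
    exact (hab.sum_divisors_mul_of_map_mul fun _ _ _ => by push_cast; exact map_mul _ _ _).symm

end GaussianInt

/-- `r(n)/4` is multiplicative and equals `(1 ⋆ χ₄)(n) = ∑_{d ∣ n} χ₄(d)`. -/
theorem sumTwoSquares_div_four (r4 : ℕ → ℚ) (hr4 : ∀ n, r4 n = (sumTwoSquaresReps n : ℚ) / 4) :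
    r4 1 = 1 ∧
    (∀ m n : ℕ, 0 < m → 0 < n → Nat.Coprime m n → r4 (m * n) = r4 m * r4 n) ∧
    (∀ n : ℕ, 0 < n → r4 n = ∑ d ∈ n.divisors, ((ZMod.χ₄ (d : ZMod 4) : ℤ) : ℚ)) := by
  have hr4_ncard (n : ℕ) (hn : 0 < n) : r4 n = (GaussianInt.normClasses n).ncard := by
    rw [hr4, GaussianInt.sumTwoSquaresReps_eq_ncard, GaussianInt.ncard_setOf_norm_eq hn.ne']
    push_cast
    ring
  have hr4_sum (n : ℕ) (hn : 0 < n) :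
      r4 n = ∑ d ∈ n.divisors, ((ZMod.χ₄ (d : ZMod 4) : ℤ) : ℚ) := by
    rw [hr4_ncard n hn, ← Int.cast_natCast, GaussianInt.ncard_normClasses_eq_sum_divisors hn,
      Int.cast_sum]
  refine ⟨by simpa using hr4_sum 1 one_pos, fun m n hm hn hmn => ?_, hr4_sum⟩
  rw [hr4_ncard _ (Nat.mul_pos hm hn), hr4_ncard m hm, hr4_ncard n hn,
    GaussianInt.ncard_normClasses_mul hmn hm hn, Nat.cast_mul]
end

section
/- For all positive integers a ≤ b with a > 1, the parity of #{p prime : a ≤ p ≤ b} equals the parity of (T₂*(b) − T₂*(a−1))/2 − Σ_{j ≥ 2} #{p prime : a^{1/j} ≤ p ≤ b^{1/j}}, where T₂*(x) = Σ_{n ≤ x} τ₂*(n). -/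
/-!
A unitary divisor of `n` takes the full power of `n` at each of its primes, so it is determined by
its set of prime factors and `τ₂*(n) = 2 ^ ω(n)`. For `n > 1` the half `2 ^ (ω(n) - 1)` is odd
exactly when `n` is a prime power, so `(T₂*(b) - T₂*(a - 1)) / 2` has the parity of the number of
prime powers in `[a, b]`. Counting the prime powers `p ^ j ∈ [a, b]` exponent by exponent, the
exponent `j = 1` contributes the primes and `j ≥ 2` the primes with `a ^ (1/j) ≤ p ≤ b ^ (1/j)`.
-/

/-- `T₂*(x) = ∑_{n ≤ x} τ₂*(n)`, the summatory function of the number of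
unitary divisors. -/
def T2star (x : ℕ) : ℕ :=
  ∑ n ∈ Finset.Icc 1 x, (n.divisors.filter (fun d => Nat.gcd d (n / d) = 1)).card

open Finset

namespace Nat

def unitaryDivisors (n : ℕ) : Finset ℕ := n.divisors.filter fun d => Nat.gcd d (n / d) = 1

variable {n d : ℕ}

lemma mem_unitaryDivisors : d ∈ n.unitaryDivisors ↔ d ∣ n ∧ n ≠ 0 ∧ d.Coprime (n / d) := by
  simp [unitaryDivisors, Nat.Coprime, and_assoc]

lemma factorization_eq_filter_of_mem_unitaryDivisors (hd : d ∈ n.unitaryDivisors) :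
    d.factorization = n.factorization.filter (· ∈ d.primeFactors) := by
  obtain ⟨hdn, hn, hcop⟩ := mem_unitaryDivisors.1 hd
  have hd0 : d ≠ 0 := ne_zero_of_dvd_ne_zero hn hdn
  have hsplit : n.factorization = d.factorization + (n / d).factorization := by
    rw [← factorization_mul hd0 ((Nat.div_ne_zero_iff_of_dvd hdn).2 ⟨hn, hd0⟩),
      Nat.mul_div_cancel' hdn]
  ext p
  rw [Finsupp.filter_apply]
  split_ifs with hp
  · have hpq : ¬p ∣ n / d := ((prime_of_mem_primeFactors hp).coprime_iff_not_dvd).1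
      (hcop.coprime_dvd_left (dvd_of_mem_primeFactors hp))
    rw [hsplit, Finsupp.add_apply, factorization_eq_zero_of_not_dvd hpq, add_zero]
  · rwa [← support_factorization, Finsupp.notMem_support_iff] at hp

lemma factorization_prod_pow_filter (P : ℕ → Prop) [DecidablePred P] :
    ((n.factorization.filter P).prod (· ^ ·)).factorization = n.factorization.filter P :=
  prod_pow_factorization_eq_self fun _ hp ↦ prime_of_mem_primeFactors (mem_filter.1 hp).1

lemma primeFactors_prod_pow_filter (S : Finset ℕ) :
    ((n.factorization.filter (· ∈ S)).prod (· ^ ·)).primeFactors =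
      {p ∈ n.primeFactors | p ∈ S} := by
  rw [← support_factorization, factorization_prod_pow_filter]
  rfl

lemma prod_pow_filter_mem_unitaryDivisors (hn : n ≠ 0) (S : Finset ℕ) :
    (n.factorization.filter (· ∈ S)).prod (· ^ ·) ∈ n.unitaryDivisors := by
  set f := n.factorization.filter (· ∈ S)
  set g := n.factorization.filter (· ∉ S)
  have hfg : f.prod (· ^ ·) * g.prod (· ^ ·) = n := by
    rw [← Finsupp.prod_add_index' (by simp) Nat.pow_add, Finsupp.filter_add_filter_not,
      prod_factorization_pow_eq_self hn]
  have hf0 : f.prod (· ^ ·) ≠ 0 := left_ne_zero_of_mul (hfg ▸ hn)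
  have hg0 : g.prod (· ^ ·) ≠ 0 := right_ne_zero_of_mul (hfg ▸ hn)
  refine mem_unitaryDivisors.2 ⟨Dvd.intro _ hfg, hn, ?_⟩
  rw [← hfg, Nat.mul_div_cancel_left _ (Nat.pos_of_ne_zero hf0),
    ← disjoint_primeFactors hf0 hg0, ← support_factorization, ← support_factorization,
    factorization_prod_pow_filter, factorization_prod_pow_filter]
  exact disjoint_filter_filter_not _ _ _

theorem card_unitaryDivisors (hn : n ≠ 0) : #n.unitaryDivisors = 2 ^ #n.primeFactors := by
  rw [← card_powerset]
  refine card_bij' (fun d _ ↦ d.primeFactors)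
    (fun S _ ↦ (n.factorization.filter (· ∈ S)).prod (· ^ ·)) (fun d hd ↦ ?_)
    (fun S _ ↦ prod_pow_filter_mem_unitaryDivisors hn S) (fun d hd ↦ ?_) (fun S hS ↦ ?_)
  · exact mem_powerset.2 (primeFactors_mono (mem_unitaryDivisors.1 hd).1 hn)
  · obtain ⟨hdn, hn, -⟩ := mem_unitaryDivisors.1 hd
    rw [← factorization_eq_filter_of_mem_unitaryDivisors hd,
      prod_factorization_pow_eq_self (ne_zero_of_dvd_ne_zero hn hdn)]
  · rw [primeFactors_prod_pow_filter, filter_mem_eq_inter, inter_eq_right.2 (mem_powerset.1 hS)]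

lemma card_unitaryDivisors_eq_two_mul (hn : 1 < n) :
    #n.unitaryDivisors = 2 * 2 ^ (#n.primeFactors - 1) := by
  have hω : #n.primeFactors ≠ 0 := (Finset.card_pos.2 (nonempty_primeFactors.2 hn)).ne'
  rw [card_unitaryDivisors (by omega), ← pow_succ']
  congr 1
  omega

lemma two_pow_card_primeFactors_sub_one_modEq (hn : 1 < n) :
    2 ^ (#n.primeFactors - 1) ≡ if IsPrimePow n then 1 else 0 [MOD 2] := by
  have hω : #n.primeFactors ≠ 0 := (Finset.card_pos.2 (nonempty_primeFactors.2 hn)).ne'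
  simp only [isPrimePow_iff_card_primeFactors_eq_one]
  split_ifs with h
  · simp [h, Nat.ModEq]
  · obtain ⟨k, hk⟩ : ∃ k, #n.primeFactors - 1 = k + 1 := ⟨#n.primeFactors - 2, by omega⟩
    simp [hk, pow_succ, Nat.ModEq]

lemma sum_two_pow_card_primeFactors_sub_one_modEq {s : Finset ℕ} (hs : ∀ n ∈ s, 1 < n) :
    ∑ n ∈ s, 2 ^ (#n.primeFactors - 1) ≡ #{n ∈ s | IsPrimePow n} [MOD 2] := by
  rw [card_filter]
  exact Nat.ModEq.sum fun n hn ↦ two_pow_card_primeFactors_sub_one_modEq (hs n hn)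

theorem card_filter_isPrimePow_Icc (a b : ℕ) :
    #{n ∈ Icc a b | IsPrimePow n} =
      ∑ j ∈ Icc 1 b, #{p ∈ Icc 1 b | p.Prime ∧ a ≤ p ^ j ∧ p ^ j ≤ b} := by
  rw [← Finset.card_sigma]
  symm
  refine card_bij (fun x _ ↦ x.2 ^ x.1) ?_ ?_ ?_
  · rintro ⟨j, p⟩ hx
    simp only [mem_sigma, mem_Icc, mem_filter] at hx ⊢
    exact ⟨hx.2.2.2, hx.2.2.1.isPrimePow.pow (by omega)⟩
  · rintro ⟨j, p⟩ hx ⟨k, q⟩ hy h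
    simp only [mem_sigma, mem_Icc, mem_filter] at hx hy h
    obtain ⟨rfl, rfl⟩ := hx.2.2.1.pow_inj' hy.2.2.1 (by omega) (by omega) h
    rfl
  · intro n hn
    simp only [mem_Icc, mem_filter] at hn
    obtain ⟨⟨han, hnb⟩, hpp⟩ := hn
    obtain ⟨p, j, hp, hj, rfl⟩ := (isPrimePow_nat_iff _).1 hpp
    have hjb : j ≤ b := (Nat.lt_pow_self hp.one_lt).le.trans hnb
    have hpb : p ≤ b := (Nat.le_self_pow hj.ne' p).trans hnb
    refine ⟨⟨j, p⟩, ?_, rfl⟩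
    simp only [mem_sigma, mem_Icc, mem_filter]
    exact ⟨⟨hj, hjb⟩, ⟨hp.one_lt.le, hpb⟩, hp, han, hnb⟩

theorem card_filter_isPrimePow_Icc_eq_add {a b : ℕ} (hb : 1 ≤ b) :
    #{n ∈ Icc a b | IsPrimePow n} = #{p ∈ Icc a b | p.Prime} +
      ∑ j ∈ Icc 2 b, #{p ∈ Icc 1 b | p.Prime ∧ a ≤ p ^ j ∧ p ^ j ≤ b} := by
  rw [card_filter_isPrimePow_Icc, ← add_sum_Ioc_eq_sum_Icc hb, ← Icc_add_one_left_eq_Ioc]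
  congr 2
  ext p
  simp only [mem_filter, mem_Icc, pow_one]
  constructor
  · rintro ⟨-, hp, hap, hpb⟩
    exact ⟨⟨hap, hpb⟩, hp⟩
  · rintro ⟨⟨hap, hpb⟩, hp⟩
    exact ⟨⟨hp.one_lt.le, hpb⟩, hp, hap, hpb⟩

end Nat

lemma T2star_add_sum_Ioc {m n : ℕ} (h : m ≤ n) :
    T2star m + ∑ k ∈ Ioc m n, #k.unitaryDivisors = T2star n := by
  have hIoc (x : ℕ) : T2star x = ∑ k ∈ Ioc 0 x, #k.unitaryDivisors := by
    rw [← Icc_add_one_left_eq_Ioc]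
    rfl
  rw [hIoc, hIoc, sum_Ioc_consecutive _ (Nat.zero_le m) h]

lemma T2star_sub_T2star_div_two {a b : ℕ} (ha : 1 < a) (hab : a ≤ b) :
    ((T2star b : ℤ) - T2star (a - 1)) / 2 = ∑ n ∈ Icc a b, 2 ^ (#n.primeFactors - 1) := by
  rw [← T2star_add_sum_Ioc (show a - 1 ≤ b by omega), ← Icc_add_one_left_eq_Ioc,
    Nat.sub_add_cancel ha.le, sum_congr rfl fun n hn ↦
      Nat.card_unitaryDivisors_eq_two_mul (ha.trans_le (mem_Icc.1 hn).1), ← mul_sum]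
  push_cast
  rw [add_sub_cancel_left, Int.mul_ediv_cancel_left _ two_ne_zero]

lemma natCast_rpow_one_div_le_iff {x y j : ℕ} (hj : j ≠ 0) :
    (x : ℝ) ^ ((1 : ℝ) / j) ≤ y ↔ x ≤ y ^ j := by
  rw [one_div, Real.rpow_inv_le_iff_of_pos (by positivity) (by positivity) (by positivity)]
  exact_mod_cast Iff.rfl

lemma le_natCast_rpow_one_div_iff {x y j : ℕ} (hj : j ≠ 0) :
    (x : ℝ) ≤ (y : ℝ) ^ ((1 : ℝ) / j) ↔ x ^ j ≤ y := by
  rw [one_div, Real.le_rpow_inv_iff_of_pos (by positivity) (by positivity) (by positivity)]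
  exact_mod_cast Iff.rfl

open scoped Classical in
/-- The parity of the number of primes in `[a, b]` equals the parity of
`(T₂*(b) - T₂*(a-1))/2 - ∑_{j ≥ 2} #{p prime : a^{1/j} ≤ p ≤ b^{1/j}}`. -/
theorem parity_primes_interval (a b : ℕ) (ha : 1 < a) (hab : a ≤ b) :
    (((Finset.Icc a b).filter Nat.Prime).card : ℤ) ≡
      ((T2star b : ℤ) - (T2star (a - 1) : ℤ)) / 2 -
        ∑ j ∈ Finset.Icc 2 b,
          (((Finset.Icc 1 b).filter (fun p => Nat.Prime p ∧
            (a : ℝ) ^ ((1 : ℝ) / j) ≤ (p : ℝ) ∧ (p : ℝ) ≤ (b : ℝ) ^ ((1 : ℝ) / j))).card : ℤ)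
      [ZMOD 2] := by
  have hroots : ∑ j ∈ Icc 2 b, (((Icc 1 b).filter fun p : ℕ ↦ p.Prime ∧
      (a : ℝ) ^ ((1 : ℝ) / j) ≤ (p : ℝ) ∧ (p : ℝ) ≤ (b : ℝ) ^ ((1 : ℝ) / j)).card : ℤ) =
      ∑ j ∈ Icc 2 b, (#{p ∈ Icc 1 b | p.Prime ∧ a ≤ p ^ j ∧ p ^ j ≤ b} : ℤ) := by
    refine sum_congr rfl fun j hj ↦ ?_
    have hj0 : j ≠ 0 := by rw [mem_Icc] at hj; omega
    simp only [natCast_rpow_one_div_le_iff hj0, le_natCast_rpow_one_div_iff hj0]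
  have hparity := Int.natCast_modEq_iff.2 (Nat.sum_two_pow_card_primeFactors_sub_one_modEq
    (s := Icc a b) fun n hn ↦ ha.trans_le (mem_Icc.1 hn).1)
  rw [Nat.card_filter_isPrimePow_Icc_eq_add (by omega)] at hparity
  push_cast at hparity
  rw [T2star_sub_T2star_div_two ha hab, hroots]
  apply Int.ModEq.add_right_cancel'
  rw [sub_add_cancel]
  exact hparity.symm
end
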